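/- Let Γ ⊆ ℝⁿ be an n-attractor with defining IFS s₁,…,s_M, and let O be any non-empty bounded open set satisfying the OSC for this IFS. Then Γ equals the closure of O; in particular O ⊆ Γ and the interior of Γ is non-empty. -/

import Mathlib

/-!
Let `T A = ⋃ i, sᵢ '' A` be the Hutchinson operator and `r < 1` a common Lipschitz constant of
the `sᵢ`. If `K` is closed, non-empty and `T K ⊆ K`, and `A` is bounded with
`A ⊆ closure (T A)`, then `c = sup_{x ∈ A} d(x, K)` satisfies `c ≤ r c`, hence `c = 0` and
`A ⊆ K`. With `A = Γ`, `K = closure O` this gives `Γ ⊆ closure O`.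

Conversely, `sᵢ` scales `n`-dimensional Hausdorff measure by `ρᵢⁿ`, so disjointness of the
`sᵢ '' O` and `∑ ρᵢⁿ = 1` give `μH[n] (T O) = μH[n] O < ∞` with `T O ⊆ O`. The open set
`O \ closure (T O)` is then null, hence empty, and the same contraction argument with `A = O`,
`K = Γ` gives `O ⊆ Γ`.
-/

open Function Metric MeasureTheory Set
open scoped ENNReal NNReal

section Similarity

variable {X Y : Type*} [MetricSpace X] [MetricSpace Y] {f : X → Y} {ρ : ℝ}

theorem lipschitzWith_of_dist_eq (hf : ∀ x y, dist (f x) (f y) = ρ * dist x y) :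
    LipschitzWith ρ.toNNReal f :=
  LipschitzWith.of_dist_le_mul fun x y => by
    rw [hf]
    exact mul_le_mul_of_nonneg_right (Real.le_coe_toNNReal ρ) dist_nonneg

theorem injective_of_dist_eq (hρ : ρ ≠ 0) (hf : ∀ x y, dist (f x) (f y) = ρ * dist x y) :
    Injective f := fun x y hxy => by
  rw [← dist_eq_zero, ← mul_eq_zero_iff_left hρ, ← hf, hxy, dist_self]

theorem measurableSet_image_of_dist_eq [MeasurableSpace X] [BorelSpace X] [PolishSpace X]
    [MeasurableSpace Y] [BorelSpace Y] (hρ : ρ ≠ 0)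
    (hf : ∀ x y, dist (f x) (f y) = ρ * dist x y) {A : Set X} (hA : MeasurableSet A) :
    MeasurableSet (f '' A) :=
  hA.image_of_continuousOn_injOn (lipschitzWith_of_dist_eq hf).continuous.continuousOn
    (injective_of_dist_eq hρ hf).injOn

theorem hausdorffMeasure_image_of_dist_eq [MeasurableSpace X] [BorelSpace X]
    [MeasurableSpace Y] [BorelSpace Y] (hρ : 0 < ρ)
    (hf : ∀ x y, dist (f x) (f y) = ρ * dist x y) {d : ℝ} (hd : 0 ≤ d) (A : Set X) :
    μH[d] (f '' A) = ENNReal.ofReal (ρ ^ d) * μH[d] A := by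
  have hanti : AntilipschitzWith ρ⁻¹.toNNReal f :=
    AntilipschitzWith.of_le_mul_dist fun x y => by
      rw [hf, Real.coe_toNNReal _ (inv_nonneg.2 hρ.le), inv_mul_cancel_left₀ hρ.ne']
  rw [← ENNReal.ofReal_rpow_of_pos hρ]
  refine le_antisymm ((lipschitzWith_of_dist_eq hf).hausdorffMeasure_image_le hd A) ?_
  have hle := hanti.le_hausdorffMeasure_image hd A
  rw [Real.toNNReal_inv, ENNReal.coe_inv (by simpa using hρ), ENNReal.inv_rpow] at hle
  rwa [ENNReal.mul_le_iff_le_inv]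
  all_goals simp [hρ]

end Similarity

theorem LipschitzWith.infEDist_image_le {X Y : Type*} [PseudoEMetricSpace X]
    [PseudoEMetricSpace Y] {f : X → Y} {r : ℝ≥0} (hf : LipschitzWith r f) (x : X)
    {K : Set X} (hK : K.Nonempty) : infEDist (f x) (f '' K) ≤ r * infEDist x K := by
  have : Nonempty K := hK.to_subtype
  rw [show infEDist x K = ⨅ y : K, edist x y from iInf_subtype', ENNReal.mul_iInf (by simp)]
  exact le_iInf fun y => (infEDist_le_edist_of_mem (mem_image_of_mem f y.2)).trans (hf x y)

section Hutchinson

variable {X ι : Type*} [MetricSpace X] (s : ι → X → X)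

def hutchinson (A : Set X) : Set X :=
  ⋃ i, s i '' A

variable {s}

theorem hutchinson_closure_subset (hs : ∀ i, Continuous (s i)) (A : Set X) :
    hutchinson s (closure A) ⊆ closure (hutchinson s A) :=
  iUnion_subset fun i =>
    (image_closure_subset_closure_image (hs i)).trans
      (closure_mono (subset_iUnion (fun i => s i '' A) i))

theorem subset_of_subset_closure_hutchinson {r : ℝ≥0} (hr : r < 1)
    (hs : ∀ i, LipschitzWith r (s i)) {A K : Set X} (hA : Bornology.IsBounded A)
    (hK : IsClosed K) (hKne : K.Nonempty) (hKinv : hutchinson s K ⊆ K)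
    (hAK : A ⊆ closure (hutchinson s A)) : A ⊆ K := by
  set c := ⨆ x ∈ A, infEDist x K
  have hc_top : c ≠ ∞ := by
    obtain ⟨k, hk⟩ := hKne
    obtain ⟨R, hR⟩ := hA.subset_closedBall k
    refine ne_top_of_le_ne_top (ENNReal.ofReal_ne_top (r := R)) (iSup₂_le fun x hx => ?_)
    calc infEDist x K ≤ edist x k := infEDist_le_edist_of_mem hk
      _ = ENNReal.ofReal (dist x k) := edist_dist x k
      _ ≤ ENNReal.ofReal R := ENNReal.ofReal_le_ofReal (hR hx)
  have hc_le : c ≤ r * c := by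
    have hT : hutchinson s A ⊆ {x | infEDist x K ≤ r * c} := by
      rintro _ ⟨_, ⟨i, rfl⟩, a, ha, rfl⟩
      calc infEDist (s i a) K ≤ infEDist (s i a) (s i '' K) :=
            infEDist_anti ((subset_iUnion (fun i => s i '' K) i).trans hKinv)
        _ ≤ r * infEDist a K := (hs i).infEDist_image_le a hKne
        _ ≤ r * c := by gcongr; exact le_iSup₂ (f := fun x _ => infEDist x K) a ha
    exact iSup₂_le fun x hx =>
      closure_minimal hT (isClosed_le continuous_infEDist continuous_const) (hAK hx)
  have hc_zero : c = 0 := by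
    by_contra hc0
    have : (r : ℝ≥0∞) * c < c := by
      simpa using ENNReal.mul_lt_mul_left hc0 hc_top (ENNReal.coe_lt_one_iff.2 hr)
    exact (hc_le.trans_lt this).false
  intro x hx
  refine (mem_iff_infEDist_zero_of_closed hK).2 (nonpos_iff_eq_zero.1 ?_)
  exact hc_zero ▸ le_iSup₂ (f := fun x _ => infEDist x K) x hx

theorem hausdorffMeasure_hutchinson_of_pairwise_disjoint [Fintype ι] [MeasurableSpace X]
    [BorelSpace X] {ρ : ι → ℝ} (hρ : ∀ i, 0 < ρ i)
    (hs : ∀ i x y, dist (s i x) (s i y) = ρ i * dist x y) {d : ℝ} (hd : 0 ≤ d)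
    (hsum : ∑ i, ρ i ^ d = 1) {A : Set X} (hA : ∀ i, MeasurableSet (s i '' A))
    (hdisj : Pairwise (Disjoint on fun i => s i '' A)) :
    μH[d] (hutchinson s A) = μH[d] A := by
  rw [hutchinson, measure_iUnion hdisj hA, tsum_fintype]
  simp_rw [hausdorffMeasure_image_of_dist_eq (hρ _) (hs _) hd]
  rw [← Finset.sum_mul,
    ← ENNReal.ofReal_sum_of_nonneg fun i _ => (Real.rpow_pos_of_pos (hρ i) d).le, hsum,
    ENNReal.ofReal_one, one_mul]

end Hutchinson

theorem subset_closure_of_measure_eq {X : Type*} [TopologicalSpace X] [MeasurableSpace X]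
    {μ : Measure X} [μ.IsOpenPosMeasure] {U B : Set X} (hU : IsOpen U) (hBU : B ⊆ U)
    (hB : NullMeasurableSet B μ) (hμ : μ B = μ U) (hU_fin : μ U ≠ ∞) : U ⊆ closure B := by
  have hnull : μ (U \ closure B) = 0 :=
    measure_mono_null (sdiff_subset_sdiff_right subset_closure) <| by
      rw [measure_sdiff hBU hB (hμ ▸ hU_fin), hμ, tsub_self]
  exact sdiff_eq_empty.1 (((hU.sdiff isClosed_closure).measure_eq_zero_iff μ).1 hnull)

theorem statement1_general
    (n : ℕ)
    (M : ℕ)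
    (s : Fin M → EuclideanSpace ℝ (Fin n) → EuclideanSpace ℝ (Fin n))
    (ρ : Fin M → ℝ)
    (hρ : ∀ m, ρ m ∈ Set.Ioo (0 : ℝ) 1)
    (hsim : ∀ m x y, dist (s m x) (s m y) = ρ m * dist x y)
    (Γ : Set (EuclideanSpace ℝ (Fin n)))
    (hΓne : Γ.Nonempty) (hΓcomp : IsCompact Γ)
    (hattr : Γ = ⋃ m, s m '' Γ)
    (hsum : ∑ m, ρ m ^ n = 1)
    (O : Set (EuclideanSpace ℝ (Fin n)))
    (hOne : O.Nonempty) (hOopen : IsOpen O) (hObdd : Bornology.IsBounded O)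
    (hOSC1 : (⋃ m, s m '' O) ⊆ O)
    (hOSC2 : ∀ m m' : Fin M, m ≠ m' → Disjoint (s m '' O) (s m' '' O)) :
    Γ = closure O ∧ O ⊆ Γ ∧ (interior Γ).Nonempty := by
  have hlip : ∀ m, LipschitzWith (ρ m).toNNReal (s m) := fun m =>
    lipschitzWith_of_dist_eq (hsim m)
  set r := Finset.univ.sup fun m => (ρ m).toNNReal
  have hr : r < 1 := (Finset.sup_lt_iff zero_lt_one).2 fun m _ => Real.toNNReal_lt_one.2 (hρ m).2
  have hlip_r : ∀ m, LipschitzWith r (s m) := fun m =>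
    (hlip m).weaken (Finset.le_sup (f := fun m => (ρ m).toNNReal) (Finset.mem_univ m))
  have hΓO : Γ ⊆ closure O :=
    subset_of_subset_closure_hutchinson hr hlip_r hΓcomp.isBounded isClosed_closure hOne.closure
      ((hutchinson_closure_subset (fun m => (hlip m).continuous) O).trans (closure_mono hOSC1))
      (hattr.trans_subset subset_closure)
  have hmeas : ∀ m, MeasurableSet (s m '' O) := fun m =>
    measurableSet_image_of_dist_eq (hρ m).1.ne' (hsim m) hOopen.measurableSet
  have hOTO : O ⊆ closure (hutchinson s O) :=
    subset_closure_of_measure_eq (μ := μH[(n : ℝ)]) hOopen hOSC1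
      (MeasurableSet.iUnion hmeas).nullMeasurableSet
      (hausdorffMeasure_hutchinson_of_pairwise_disjoint (fun m => (hρ m).1) hsim n.cast_nonneg
        (by simpa [Real.rpow_natCast] using hsum) hmeas hOSC2)
      hObdd.measure_lt_top.ne
  have hOΓ : O ⊆ Γ :=
    subset_of_subset_closure_hutchinson hr hlip_r hObdd hΓcomp.isClosed hΓne hattr.symm.subset
      hOTO
  exact ⟨hΓO.antisymm (closure_minimal hOΓ hΓcomp.isClosed), hOΓ,
    hOne.mono (interior_maximal hOΓ hOopen)⟩

/-- If Γ is an n-attractor with defining IFS s₁,…,s_M and O is any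
non-empty bounded open set satisfying the OSC for this IFS, then Γ = closure O;
in particular O ⊆ Γ and the interior of Γ is non-empty. -/
theorem statement1
    (n : ℕ) (hn : 1 ≤ n)
    (M : ℕ) (hM : 2 ≤ M)
    (s : Fin M → EuclideanSpace ℝ (Fin n) → EuclideanSpace ℝ (Fin n))
    (ρ : Fin M → ℝ)
    (hρ : ∀ m, ρ m ∈ Set.Ioo (0 : ℝ) 1)
    (hsim : ∀ m x y, dist (s m x) (s m y) = ρ m * dist x y)
    (Γ : Set (EuclideanSpace ℝ (Fin n)))
    (hΓne : Γ.Nonempty) (hΓcomp : IsCompact Γ)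
    (hattr : Γ = ⋃ m, s m '' Γ)
    (hsum : ∑ m, ρ m ^ n = 1)
    (O : Set (EuclideanSpace ℝ (Fin n)))
    (hOne : O.Nonempty) (hOopen : IsOpen O) (hObdd : Bornology.IsBounded O)
    (hOSC1 : (⋃ m, s m '' O) ⊆ O)
    (hOSC2 : ∀ m m' : Fin M, m ≠ m' → Disjoint (s m '' O) (s m' '' O)) :
    Γ = closure O ∧ O ⊆ Γ ∧ (interior Γ).Nonempty :=
  statement1_general n M s ρ hρ hsim Γ hΓne hΓcomp hattr hsum O hOne hOopen hObdd hOSC1 hOSC2
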